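/- arXiv:2404.12989 — 2 statements merged into one kernel-verified Lean document; each statement's English description precedes it below -/
import Mathlib

section
/- If A(x) ∈ ℝ[[x]] is an AESW series and (A_0(x), ..., A_{p-1}(x)) is a fully interlacing sequence of power series, then (A(x)A_0(x), ..., A(x)A_{p-1}(x)) is also fully interlacing. -/
open scoped BigOperators

/-- The coefficient of `x^n` in a power series, for an integer `n`
(zero when `n < 0`). -/
noncomputable def intCoeff (A : PowerSeries ℝ) (n : ℤ) : ℝ :=
  if 0 ≤ n then PowerSeries.coeff (R := ℝ) n.toNat A else 0

/-- A `ℤ × ℤ` matrix is totally positive (TP) if every finite square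
submatrix (rows and columns chosen in increasing order) has nonnegative
determinant. -/
def TP (M : ℤ → ℤ → ℝ) : Prop :=
  ∀ (n : ℕ) (r c : Fin n → ℤ), StrictMono r → StrictMono c →
    0 ≤ (Matrix.of fun a b => M (r a) (c b)).det

/-- The interlacing matrix `Lace(A)` of a `p × q` matrix of formal power
series: the `(u,v)`-entry, for `u = p·u' + i` (`0 ≤ i < p`) and
`v = q·v' + j` (`0 ≤ j < q`), is the coefficient of `x^(v'-u')` in `A i j`. -/
noncomputable def lace {p q : ℕ} [NeZero p] [NeZero q]
    (A : Fin p → Fin q → PowerSeries ℝ) : ℤ → ℤ → ℝ := fun u v =>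
  intCoeff
    (A ⟨(u % (p : ℤ)).toNat, by
          have hp : (0 : ℤ) < (p : ℤ) := by
            exact_mod_cast Nat.pos_of_ne_zero (NeZero.ne p)
          have h1 := Int.emod_nonneg u hp.ne'
          have h2 := Int.emod_lt_of_pos u hp
          omega⟩
       ⟨(v % (q : ℤ)).toNat, by
          have hq : (0 : ℤ) < (q : ℤ) := by
            exact_mod_cast Nat.pos_of_ne_zero (NeZero.ne q)
          have h1 := Int.emod_nonneg v hq.ne'
          have h2 := Int.emod_lt_of_pos v hq
          omega⟩)
    (v / (q : ℤ) - u / (p : ℤ))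

/-- A matrix of formal power series is fully interlacing when its
interlacing matrix is totally positive. -/
def FullyInterlacing {p q : ℕ} [NeZero p] [NeZero q]
    (A : Fin p → Fin q → PowerSeries ℝ) : Prop :=
  TP (lace A)

/-- A sequence of power series viewed as a `p × 1` column matrix. -/
noncomputable def colMat {p : ℕ} (A : Fin p → PowerSeries ℝ) :
    Fin p → Fin 1 → PowerSeries ℝ := fun i _ => A i

/-- `A(x)` interlaces `B(x)`: the `2 × 1` column `(A, B)ᵀ` is fully
interlacing. -/
def SeriesInterlaces (A B : PowerSeries ℝ) : Prop :=
  FullyInterlacing (colMat ![A, B])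

/-- A power series is AESW (a Pólya frequency sequence) when its Toeplitz
matrix `(a_{v-u})` is totally positive. -/
def IsAESW (A : PowerSeries ℝ) : Prop :=
  TP fun u v => intCoeff A (v - u)

/-- The `k`-th Veronese `r`-section `S_k^{(r)} A(x) = ∑_{n ≥ 0} a_{k+rn} xⁿ`. -/
noncomputable def veronese (r k : ℕ) (A : PowerSeries ℝ) : PowerSeries ℝ :=
  PowerSeries.mk fun n => PowerSeries.coeff (R := ℝ) (k + r * n) A

/-!
The interlacing matrix of `(A * A₀, …, A * A_{p-1})` is the product
`Lace(A₀, …, A_{p-1}) · T(A)` of the interlacing matrix of the sequence with the Toeplitz matrix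
of `A`, and on any finite set of rows and columns only finitely many middle indices contribute.
By the Cauchy–Binet formula every minor of the product is a sum of products of a minor of each
factor, all nonnegative.
-/

open Finset

namespace Tuple

theorem sort_comp_perm_of_strictMono {α : Type*} [LinearOrder α] {n : ℕ} {f : Fin n → α}
    (hf : StrictMono f) (σ : Equiv.Perm (Fin n)) : sort (f ∘ σ) = σ⁻¹ := by
  refine (eq_sort_iff.2 ⟨?_, fun i j hij h => ?_⟩).symm
  · simpa [Function.comp_def] using hf.monotone
  · exact absurd (hf.injective (by simpa using h)) hij.ne

open Classical in
theorem sum_injective_eq_sum_strictMono_sum_perm {α M : Type*} [LinearOrder α] [Fintype α]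
    [AddCommMonoid M] {n : ℕ} (G : (Fin n → α) → M) :
    ∑ g with Function.Injective g, G g =
      ∑ f with StrictMono f, ∑ σ : Equiv.Perm (Fin n), G (f ∘ σ) := by
  rw [← sum_product']
  refine sum_nbij' (fun g => (g ∘ sort g, (sort g)⁻¹)) (fun x => x.1 ∘ x.2) ?_ ?_ ?_ ?_ ?_
  · intro g hg
    simp only [mem_filter, mem_univ, true_and, mem_product, and_true] at hg ⊢
    exact (monotone_sort g).strictMono_of_injective (hg.comp (sort g).injective)
  · rintro ⟨f, σ⟩ hf
    simp only [mem_filter, mem_univ, true_and, mem_product, and_true] at hf ⊢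
    exact hf.injective.comp σ.injective
  · intro g _
    funext i
    simp
  · rintro ⟨f, σ⟩ hf
    simp only [mem_filter, mem_univ, true_and, mem_product, and_true] at hf
    rw [sort_comp_perm_of_strictMono hf, inv_inv]
    ext i
    · simp
    · rfl
  · intro g _
    congr
    funext i
    simp

end Tuple

namespace Matrix

variable {R : Type*} [CommRing R]

theorem det_mul_eq_sum_prod_mul_det_submatrix {n m : Type*} [Fintype n] [DecidableEq n]
    [Fintype m] (P : Matrix n m R) (Q : Matrix m n R) :
    (P * Q).det = ∑ g : n → m, (∏ i, P i (g i)) * (Q.submatrix g id).det := by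
  have hrows : P * Q = fun i => ∑ k, P i k • Q k := by
    ext i j
    simp [mul_apply]
  rw [hrows]
  refine ((detRowAlternating : (n → R) [⋀^n]→ₗ[R] R).toMultilinearMap.map_sum _).trans ?_
  refine sum_congr rfl fun g _ => ?_
  exact (detRowAlternating : (n → R) [⋀^n]→ₗ[R] R).toMultilinearMap.map_smul_univ _ _

open Classical in
/-- The Cauchy–Binet formula. -/
theorem det_mul_eq_sum_det_mul_det {n : ℕ} {m : Type*} [Fintype m] [LinearOrder m]
    (P : Matrix (Fin n) m R) (Q : Matrix m (Fin n) R) :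
    (P * Q).det = ∑ f with StrictMono f, (P.submatrix id f).det * (Q.submatrix f id).det := by
  have hnoninj : ∑ g with ¬ Function.Injective g,
      (∏ i, P i (g i)) * (Q.submatrix g id).det = 0 := by
    refine sum_eq_zero fun g hg => ?_
    obtain ⟨i, j, hij, hne⟩ := Function.not_injective_iff.1 (mem_filter.1 hg).2
    rw [det_zero_of_row_eq hne (by ext; simp [hij]), mul_zero]
  rw [det_mul_eq_sum_prod_mul_det_submatrix, ← sum_filter_add_sum_filter_not _
    Function.Injective, hnoninj, add_zero, Tuple.sum_injective_eq_sum_strictMono_sum_perm]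
  refine sum_congr rfl fun f _ => ?_
  have hperm (σ : Equiv.Perm (Fin n)) : (Q.submatrix (f ∘ σ) id).det =
      Equiv.Perm.sign σ * (Q.submatrix f id).det :=
    det_permute σ (Q.submatrix f id)
  rw [← det_transpose (P.submatrix id f), det_apply, sum_mul]
  refine sum_congr rfl fun σ _ => ?_
  rw [hperm]
  simp only [transpose_apply, submatrix_apply, id, Function.comp_apply, Units.smul_def,
    zsmul_eq_mul]
  ring

end Matrix

theorem TP.sum_mul {M N : ℤ → ℤ → ℝ} (hM : TP M) (hN : TP N) (s : Finset ℤ) :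
    TP fun u v => ∑ w ∈ s, M u w * N w v := by
  intro n r c hr hc
  let P : Matrix (Fin n) s ℝ := .of fun a w => M (r a) w
  let Q : Matrix s (Fin n) ℝ := .of fun w b => N w (c b)
  have hPQ : (Matrix.of fun a b => ∑ w ∈ s, M (r a) w * N w (c b)) = P * Q := by
    ext a b
    exact (sum_coe_sort s fun w => M (r a) w * N w (c b)).symm
  rw [hPQ, Matrix.det_mul_eq_sum_det_mul_det]
  refine sum_nonneg fun f hf => ?_
  have hcols : StrictMono (Subtype.val ∘ f) := (Subtype.strictMono_coe _).comp (mem_filter.1 hf).2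
  exact mul_nonneg (hM n r _ hr hcols) (hN n _ c hcols hc)

lemma intCoeff_of_neg (A : PowerSeries ℝ) {n : ℤ} (hn : n < 0) : intCoeff A n = 0 :=
  if_neg hn.not_ge

lemma intCoeff_natCast (A : PowerSeries ℝ) (n : ℕ) : intCoeff A n = PowerSeries.coeff n A :=
  if_pos n.cast_nonneg

lemma sum_Icc_add_natCast {M : Type*} [AddCommMonoid M] (k : ℤ) (n : ℕ) (g : ℤ → M) :
    ∑ w ∈ Icc k (k + n), g w = ∑ i ∈ range (n + 1), g (k + i) := by
  have hmap : (range (n + 1)).map (Nat.castEmbedding.trans (addLeftEmbedding k)) =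
      Icc k (k + n) := by
    ext w
    simp only [mem_map, mem_range, Function.Embedding.trans_apply, Nat.castEmbedding_apply,
      addLeftEmbedding_apply, mem_Icc]
    constructor
    · rintro ⟨i, hi, rfl⟩
      omega
    · intro hw
      exact ⟨(w - k).toNat, by omega, by omega⟩
  rw [← hmap, sum_map]
  rfl

/-- Toeplitz matrices multiply: `T(A * B) = T(A) * T(B)`. -/
lemma intCoeff_mul (A B : PowerSeries ℝ) (k m : ℤ) {s : Finset ℤ} (hs : Icc k m ⊆ s) :
    intCoeff (A * B) (m - k) = ∑ w ∈ s, intCoeff A (w - k) * intCoeff B (m - w) := by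
  rw [← sum_subset hs fun w _ hw => ?_]
  · rcases lt_or_ge m k with hmk | hkm
    · rw [intCoeff_of_neg _ (by omega), Icc_eq_empty_of_lt hmk, sum_empty]
    obtain ⟨n, rfl⟩ : ∃ n : ℕ, m = k + n := ⟨(m - k).toNat, by omega⟩
    rw [add_sub_cancel_left, intCoeff_natCast, PowerSeries.coeff_mul,
      Nat.sum_antidiagonal_eq_sum_range_succ fun i j =>
        PowerSeries.coeff i A * PowerSeries.coeff j B, sum_Icc_add_natCast]
    refine sum_congr rfl fun i hi => ?_
    have hin : i ≤ n := Nat.lt_succ_iff.1 (mem_range.1 hi)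
    rw [add_sub_cancel_left, add_sub_add_left_eq_sub, ← Nat.cast_sub hin, intCoeff_natCast,
      intCoeff_natCast]
  · rcases lt_or_ge w k with hwk | hkw
    · rw [intCoeff_of_neg A (by omega), zero_mul]
    · rw [intCoeff_of_neg B (by simp only [mem_Icc, not_and_or, not_le] at hw; omega), mul_zero]

lemma lace_colMat_mul {p : ℕ} [NeZero p] (A : PowerSeries ℝ) (F : Fin p → PowerSeries ℝ)
    (u v : ℤ) {s : Finset ℤ} (hs : Icc (u / p) v ⊆ s) :
    lace (colMat fun i => A * F i) u v = ∑ w ∈ s, lace (colMat F) u w * intCoeff A (v - w) := by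
  simp only [lace, colMat, Nat.cast_one, Int.ediv_one]
  rw [mul_comm, intCoeff_mul _ _ _ _ hs]

/-- Multiplying every entry of a fully interlacing sequence by a fixed
AESW series yields a fully interlacing sequence. -/
theorem stmt10 {p : ℕ} [NeZero p] (A : PowerSeries ℝ) (hA : IsAESW A)
    (As : Fin p → PowerSeries ℝ) (h : FullyInterlacing (colMat As)) :
    FullyInterlacing (colMat fun i => A * As i) := by
  intro n r c hr hc
  obtain ⟨window, hwindow⟩ : ∃ s : Finset ℤ, ∀ a b : Fin n, Icc (r a / p) (c b) ⊆ s :=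
    ⟨univ.biUnion fun ab : Fin n × Fin n => Icc (r ab.1 / p) (c ab.2),
      fun a b _ hw => mem_biUnion.2 ⟨(a, b), mem_univ _, hw⟩⟩
  have hlace : (Matrix.of fun a b => lace (colMat fun i => A * As i) (r a) (c b)) =
      Matrix.of fun a b => ∑ w ∈ window, lace (colMat As) (r a) w * intCoeff A (c b - w) := by
    ext a b
    exact lace_colMat_mul A As (r a) (c b) (hwindow a b)
  rw [hlace]
  exact TP.sum_mul h hA window n r c hr hc
end

section
/- If A(x), B(x) ∈ ℝ[[x]] with A(x) interlacing B(x) (i.e., the column (A,B) is fully interlacing), then for all nonnegative reals λ_0, ..., λ_{r-1}, the series Σ_{k=0}^{r-1} λ_k S_k^{(r)}A(x) interlaces Σ_{k=0}^{r-1} λ_k S_k^{(r)}B(x). -/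
open scoped BigOperators

/-!
Write `M` for the interlacing matrix of `(A, B)`. Since `[xᵐ] S_k^{(r)} F = [x^{k+rm}] F` and
`k < r`, the interlacing matrix of the two combinations has `(u, v)`-entry
`∑ₖ λₖ M(ψ u, r v + k)`, where `ψ = rowDilation r` sends `2u' + i` to `2ru' + i` and is strictly
increasing. Expanding a minor by multilinearity in its columns writes it as a sum, with the
nonnegative weights `∏ λ`, of minors of `M` whose column indices `r v_b + k_b` are still strictly
increasing, because they lie in the disjoint blocks `[r v_b, r v_b + r)`.
-/

theorem TP.comp {M : ℤ → ℤ → ℝ} (hM : TP M) {ρ σ : ℤ → ℤ} (hρ : StrictMono ρ)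
    (hσ : StrictMono σ) : TP fun u v => M (ρ u) (σ v) :=
  fun n r c hr hc => hM n (ρ ∘ r) (σ ∘ c) (hρ.comp hr) (hσ.comp hc)

theorem Matrix.det_of_sum_mul_rows {R n ι : Type*} [CommRing R] [Fintype n] [DecidableEq n]
    [Fintype ι] [DecidableEq ι] (w : ι → R) (f : n → ι → n → R) :
    (Matrix.of fun i j => ∑ k, w k * f i k j).det
      = ∑ K : n → ι, (∏ i, w (K i)) * (Matrix.of fun i => f i (K i)).det := by
  have hrows : (Matrix.of fun i j => ∑ k, w k * f i k j) = fun i => ∑ k, w k • f i k := by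
    ext i j
    simp [Finset.sum_apply]
  rw [hrows]
  refine ((Matrix.detRowAlternating (R := R) (n := n)).map_sum _).trans ?_
  refine Finset.sum_congr rfl fun K _ => ?_
  exact (Matrix.detRowAlternating (R := R) (n := n)).map_smul_univ (fun i => w (K i)) _

theorem TP.sum_mul_columns {ι : Type*} [Fintype ι] [DecidableEq ι] {M : ℤ → ℤ → ℝ} (hM : TP M)
    {w : ι → ℝ} (hw : ∀ k, 0 ≤ w k) {σ : ℤ → ι → ℤ}
    (hσ : ∀ ⦃v v'⦄, v < v' → ∀ k k', σ v k < σ v' k') :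
    TP fun u v => ∑ k, w k * M u (σ v k) := by
  intro n r c hr hc
  rw [← Matrix.det_transpose]
  have hT : (Matrix.of fun a b => ∑ k, w k * M (r a) (σ (c b) k)).transpose
      = Matrix.of fun b a => ∑ k, w k * M (r a) (σ (c b) k) := rfl
  rw [hT, Matrix.det_of_sum_mul_rows]
  refine Finset.sum_nonneg fun K _ => mul_nonneg (Finset.prod_nonneg fun b _ => hw _) ?_
  have hminor := hM n r (fun b => σ (c b) (K b)) hr fun b b' hbb' => hσ (hc hbb') _ _
  rwa [← Matrix.det_transpose] at hminor

lemma intCoeff_sum {ι : Type*} (s : Finset ι) (f : ι → PowerSeries ℝ) (n : ℤ) :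
    intCoeff (∑ k ∈ s, f k) n = ∑ k ∈ s, intCoeff (f k) n := by
  unfold intCoeff; split_ifs <;> simp

lemma intCoeff_smul (c : ℝ) (F : PowerSeries ℝ) (n : ℤ) :
    intCoeff (c • F) n = c * intCoeff F n := by
  unfold intCoeff; split_ifs <;> simp

lemma intCoeff_veronese {r k : ℕ} (hk : k < r) (F : PowerSeries ℝ) (m : ℤ) :
    intCoeff (veronese r k F) m = intCoeff F (k + r * m) := by
  unfold intCoeff veronese
  rcases Int.eq_nat_or_neg m with ⟨m, rfl | rfl⟩
  · have hcast : (k : ℤ) + r * m = ((k + r * m : ℕ) : ℤ) := by push_cast; ring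
    rw [hcast, if_pos (Int.natCast_nonneg _), if_pos (Int.natCast_nonneg _), Int.toNat_natCast,
      Int.toNat_natCast, PowerSeries.coeff_mk]
  · rcases m.eq_zero_or_pos with rfl | hm
    · simp
    · have hneg : (k : ℤ) + r * -(m : ℤ) < 0 := by nlinarith
      rw [if_neg (by omega), if_neg hneg.not_ge]

lemma lace_colMat_pair (A B : PowerSeries ℝ) (u v : ℤ) :
    lace (colMat ![A, B]) u v = intCoeff (if u % 2 = 0 then A else B) (v - u / 2) := by
  unfold lace colMat
  rcases Int.emod_two_eq u with h | h <;> simp [h]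

def rowDilation (r : ℕ) (u : ℤ) : ℤ := 2 * (r * (u / 2)) + u % 2

lemma rowDilation_emod_two (r : ℕ) (u : ℤ) : rowDilation r u % 2 = u % 2 := by
  unfold rowDilation; omega

lemma rowDilation_ediv_two (r : ℕ) (u : ℤ) : rowDilation r u / 2 = r * (u / 2) := by
  unfold rowDilation; omega

lemma rowDilation_strictMono {r : ℕ} (hr : 0 < r) : StrictMono (rowDilation r) := by
  intro u w huw
  unfold rowDilation
  have hr' : (1 : ℤ) ≤ r := by exact_mod_cast hr
  rcases (by omega : u / 2 < w / 2 ∨ (u / 2 = w / 2 ∧ u % 2 < w % 2)) with hdiv | ⟨hdiv, hmod⟩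
  · have hblock : (r : ℤ) * (u / 2) + r ≤ r * (w / 2) := by
      nlinarith
    omega
  · rw [hdiv]; omega

lemma lace_sum_veronese (A B : PowerSeries ℝ) (r : ℕ) (l : Fin r → ℝ) (u v : ℤ) :
    lace (colMat ![∑ k : Fin r, l k • veronese r k A, ∑ k : Fin r, l k • veronese r k B]) u v
      = ∑ k : Fin r, l k * lace (colMat ![A, B]) (rowDilation r u) (r * v + k) := by
  have hpick : (if u % 2 = 0 then ∑ k : Fin r, l k • veronese r k A
        else ∑ k : Fin r, l k • veronese r k B)
      = ∑ k : Fin r, l k • veronese r k (if u % 2 = 0 then A else B) := by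
    split_ifs <;> rfl
  rw [lace_colMat_pair, hpick, intCoeff_sum]
  refine Finset.sum_congr rfl fun k _ => ?_
  rw [intCoeff_smul, intCoeff_veronese k.isLt, lace_colMat_pair, rowDilation_emod_two,
    rowDilation_ediv_two]
  ring_nf

lemma mul_add_lt_mul_add {r : ℕ} {v v' k k' : ℤ} (hv : v < v') (hk : k < r) (hk' : 0 ≤ k') :
    r * v + k < r * v' + k' := by
  have hblock : (r : ℤ) * (v + 1) ≤ r * v' := mul_le_mul_of_nonneg_left (by omega) (by positivity)
  linarith

/-- If `A ≺ B` then `∑ λₖ S_k^{(r)} A ≺ ∑ λₖ S_k^{(r)} B` for all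
nonnegative reals `λₖ`. -/
theorem stmt17 (A B : PowerSeries ℝ) (h : SeriesInterlaces A B)
    (r : ℕ) (hr : 0 < r) (l : Fin r → ℝ) (hl : ∀ k, 0 ≤ l k) :
    SeriesInterlaces (∑ k : Fin r, l k • veronese r (k : ℕ) A)
      (∑ k : Fin r, l k • veronese r (k : ℕ) B) := by
  have hlace : lace (colMat ![∑ k : Fin r, l k • veronese r k A,
      ∑ k : Fin r, l k • veronese r k B])
      = fun u v => ∑ k : Fin r, l k * lace (colMat ![A, B]) (rowDilation r u) (r * v + k) :=
    funext₂ (lace_sum_veronese A B r l)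
  have hrows : TP fun u v => lace (colMat ![A, B]) (rowDilation r u) v :=
    TP.comp (σ := id) h (rowDilation_strictMono hr) strictMono_id
  show TP _
  rw [hlace]
  exact hrows.sum_mul_columns hl fun v v' hvv' k k' =>
    mul_add_lt_mul_add hvv' (by exact_mod_cast k.isLt) (by positivity)
end
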